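/- arXiv:1708.01296 — 2 statements merged into one kernel-verified Lean document; each statement's English description precedes it below -/
import Mathlib

section
/- Let y_1,...,y_N be distinct real points lying on one level set of r_N = φ_N/φ_{N−1} (none a root of φ_{N−1}). Define the N×N matrix V with entries V_{jk} = φ_{k−1}(y_j)/√(K(y_j)) where K(y) = Σ_{i=0}^{N−1} φ_i(y)². Then V is an orthogonal matrix: |det V| = 1 and all singular values equal 1. -/
/-!
Orthonormality and `deg φ n = n` force the three-term recurrence
`x φₙ = aₙ φₙ₊₁ + bₙ φₙ + aₙ₋₁ φₙ₋₁` with `aₙ = ⟨x φₙ, φₙ₊₁⟩`, and telescoping it gives the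
Christoffel–Darboux identity
`(x - t) ∑_{k<N} φₖ(x) φₖ(t) = a_{N-1} (φ_N(x) φ_{N-1}(t) - φ_{N-1}(x) φ_N(t))`.
On a level set of `φ_N / φ_{N-1}` the right-hand side vanishes, so the evaluation vectors
`(φₖ(yⱼ))ₖ` of distinct points are pairwise orthogonal. Normalising them gives `V Vᵀ = 1`, and
for a square matrix this already makes `V` orthogonal with `det V = ±1`.
-/

open MeasureTheory Polynomial

noncomputable def weightedInner (ρ : ℝ → ℝ) (p q : ℝ[X]) : ℝ :=
  ∫ x, p.eval x * q.eval x * ρ x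

theorem weightedInner_X_mul_comm (ρ : ℝ → ℝ) (p q : ℝ[X]) :
    weightedInner ρ (X * p) q = weightedInner ρ (X * q) p := by
  simp only [weightedInner, eval_mul, eval_X]
  congr 1 with x
  ring

structure IsOrthonormalSeq (ρ : ℝ → ℝ) (φ : ℕ → ℝ[X]) : Prop where
  natDegree_eq : ∀ n, (φ n).natDegree = n
  integrable : ∀ m n, Integrable (fun x => (φ m).eval x * (φ n).eval x * ρ x)
  weightedInner_eq : ∀ m n, weightedInner ρ (φ m) (φ n) = if m = n then 1 else 0

namespace IsOrthonormalSeq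

variable {ρ : ℝ → ℝ} {φ : ℕ → ℝ[X]}

theorem ne_zero (hφ : IsOrthonormalSeq ρ φ) (n : ℕ) : φ n ≠ 0 := by
  intro h
  simpa [weightedInner, h] using hφ.weightedInner_eq n n

theorem degree_eq (hφ : IsOrthonormalSeq ρ φ) (n : ℕ) : (φ n).degree = n := by
  rw [degree_eq_natDegree (hφ.ne_zero n), hφ.natDegree_eq]

theorem degree_X_mul (hφ : IsOrthonormalSeq ρ φ) (n : ℕ) : (X * φ n).degree = ↑(n + 1) := by
  rw [X_mul, degree_mul_X, hφ.degree_eq]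
  rfl

theorem degree_X_mul_lt (hφ : IsOrthonormalSeq ρ φ) {n m : ℕ} (h : n + 1 < m) :
    (X * φ n).degree < (m : WithBot ℕ) := by
  rw [hφ.degree_X_mul]
  exact_mod_cast h

noncomputable def toSequence (hφ : IsOrthonormalSeq ρ φ) : Polynomial.Sequence ℝ :=
  ⟨φ, hφ.degree_eq⟩

@[simp]
theorem coe_toSequence (hφ : IsOrthonormalSeq ρ φ) : ⇑hφ.toSequence = φ := rfl

theorem isUnit_leadingCoeff (hφ : IsOrthonormalSeq ρ φ) (n : ℕ) :
    IsUnit (hφ.toSequence n).leadingCoeff :=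
  isUnit_iff_ne_zero.mpr (leadingCoeff_ne_zero.mpr (hφ.ne_zero n))

theorem weightedInner_sum_smul (hφ : IsOrthonormalSeq ρ φ) (s : Finset ℕ) (c : ℕ → ℝ) (n : ℕ) :
    weightedInner ρ (∑ i ∈ s, c i • φ i) (φ n) = if n ∈ s then c n else 0 := by
  have hexpand : (fun x => (∑ i ∈ s, c i • φ i).eval x * (φ n).eval x * ρ x) =
      fun x => ∑ i ∈ s, c i * ((φ i).eval x * (φ n).eval x * ρ x) := by
    ext x
    simp only [eval_finsetSum, eval_smul, smul_eq_mul, Finset.sum_mul, mul_assoc]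
  rw [weightedInner, hexpand, integral_finsetSum _ fun i _ => (hφ.integrable i n).const_mul _]
  have horth := hφ.weightedInner_eq
  simp only [weightedInner] at horth
  simp only [integral_const_mul, horth, mul_ite, mul_one, mul_zero, Finset.sum_ite_eq']

theorem eq_sum_weightedInner_smul (hφ : IsOrthonormalSeq ρ φ) {p : ℝ[X]} {m : ℕ}
    (hp : p.degree < m) : p = ∑ i ∈ Finset.range m, weightedInner ρ p (φ i) • φ i := by
  have hmem : p ∈ degreeLT ℝ m := mem_degreeLT.mpr hp
  rw [← hφ.toSequence.span_degreeLT (fun i _ => hφ.isUnit_leadingCoeff i),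
    show Set.Iio m = Finset.range m by simp,
    Submodule.mem_span_image_finset_iff_exists_fun'] at hmem
  obtain ⟨c, rfl⟩ := hmem
  simp only [coe_toSequence]
  refine Finset.sum_congr rfl fun i hi => ?_
  rw [hφ.weightedInner_sum_smul, if_pos hi]

theorem weightedInner_eq_zero_of_degree_lt (hφ : IsOrthonormalSeq ρ φ) {p : ℝ[X]} {n : ℕ}
    (hp : p.degree < n) : weightedInner ρ p (φ n) = 0 := by
  rw [hφ.eq_sum_weightedInner_smul hp, hφ.weightedInner_sum_smul, if_neg (by simp)]

theorem X_mul_apply_zero (hφ : IsOrthonormalSeq ρ φ) :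
    X * φ 0 = weightedInner ρ (X * φ 0) (φ 1) • φ 1 + weightedInner ρ (X * φ 0) (φ 0) • φ 0 := by
  conv_lhs => rw [hφ.eq_sum_weightedInner_smul (hφ.degree_X_mul_lt (m := 2) (by norm_num))]
  rw [Finset.sum_range_succ, Finset.sum_range_one, add_comm]

theorem X_mul_apply_succ (hφ : IsOrthonormalSeq ρ φ) (n : ℕ) :
    X * φ (n + 1) = weightedInner ρ (X * φ (n + 1)) (φ (n + 2)) • φ (n + 2) +
      weightedInner ρ (X * φ (n + 1)) (φ (n + 1)) • φ (n + 1) +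
      weightedInner ρ (X * φ n) (φ (n + 1)) • φ n := by
  conv_lhs => rw [hφ.eq_sum_weightedInner_smul (hφ.degree_X_mul_lt (m := n + 3) (by omega))]
  have hlow : ∀ i ∈ Finset.range n, weightedInner ρ (X * φ (n + 1)) (φ i) • φ i = 0 := by
    intro i hi
    rw [weightedInner_X_mul_comm, hφ.weightedInner_eq_zero_of_degree_lt
      (hφ.degree_X_mul_lt (by simpa using hi)), zero_smul]
  rw [Finset.sum_range_succ, Finset.sum_range_succ, Finset.sum_range_succ, Finset.sum_eq_zero hlow,
    weightedInner_X_mul_comm ρ (φ (n + 1)) (φ n), zero_add]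
  abel

theorem christoffel_darboux (hφ : IsOrthonormalSeq ρ φ) (n : ℕ) (x t : ℝ) :
    (x - t) * ∑ k ∈ Finset.range (n + 1), (φ k).eval x * (φ k).eval t =
      weightedInner ρ (X * φ n) (φ (n + 1)) *
        ((φ (n + 1)).eval x * (φ n).eval t - (φ n).eval x * (φ (n + 1)).eval t) := by
  induction n with
  | zero =>
    have hx := congrArg (eval x) hφ.X_mul_apply_zero
    have ht := congrArg (eval t) hφ.X_mul_apply_zero
    simp only [eval_mul, eval_X, eval_add, eval_smul, smul_eq_mul] at hx ht
    rw [Finset.sum_range_one]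
    linear_combination (φ 0).eval t * hx - (φ 0).eval x * ht
  | succ n ih =>
    have hx := congrArg (eval x) (hφ.X_mul_apply_succ n)
    have ht := congrArg (eval t) (hφ.X_mul_apply_succ n)
    simp only [eval_mul, eval_X, eval_add, eval_smul, smul_eq_mul] at hx ht
    rw [Finset.sum_range_succ, mul_add]
    linear_combination ih + (φ (n + 1)).eval t * hx - (φ (n + 1)).eval x * ht

theorem sum_eval_mul_eval_eq_zero_of_mul_eq (hφ : IsOrthonormalSeq ρ φ) {N : ℕ} {x t : ℝ}
    (hxt : x ≠ t)
    (hlevel : (φ N).eval x * (φ (N - 1)).eval t = (φ N).eval t * (φ (N - 1)).eval x) :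
    ∑ k ∈ Finset.range N, (φ k).eval x * (φ k).eval t = 0 := by
  cases N with
  | zero => simp
  | succ n =>
    have hcd := hφ.christoffel_darboux n x t
    rw [Nat.add_sub_cancel] at hlevel
    rw [show (φ (n + 1)).eval x * (φ n).eval t - (φ n).eval x * (φ (n + 1)).eval t = 0 by
      linear_combination hlevel, mul_zero] at hcd
    exact (mul_eq_zero.mp hcd).resolve_left (sub_ne_zero.mpr hxt)

end IsOrthonormalSeq

namespace Matrix

variable {m n : Type*}

noncomputable def normalizeRows [Fintype n] (u : m → n → ℝ) : Matrix m n ℝ :=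
  of fun i k => u i k / √(u i ⬝ᵥ u i)

theorem normalizeRows_mul_transpose_eq_one [Fintype n] [DecidableEq m] {u : m → n → ℝ}
    (hu : ∀ i, u i ≠ 0) (horth : Pairwise fun i j => u i ⬝ᵥ u j = 0) :
    normalizeRows u * (normalizeRows u)ᵀ = 1 := by
  ext i j
  have hentry : (normalizeRows u * (normalizeRows u)ᵀ) i j =
      u i ⬝ᵥ u j / (√(u i ⬝ᵥ u i) * √(u j ⬝ᵥ u j)) := by
    simp only [normalizeRows, mul_apply, transpose_apply, of_apply, dotProduct, Finset.sum_div]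
    exact Finset.sum_congr rfl fun k _ => div_mul_div_comm _ _ _ _
  rw [hentry, one_apply]
  by_cases hij : i = j
  · subst hij
    have hnonneg : 0 ≤ u i ⬝ᵥ u i := Finset.sum_nonneg fun k _ => mul_self_nonneg (u i k)
    rw [if_pos rfl, Real.mul_self_sqrt hnonneg, div_self (dotProduct_self_eq_zero.not.mpr (hu i))]
  · rw [if_neg hij, horth hij, zero_div]

theorem abs_det_eq_one_of_mul_transpose_eq_one [Fintype m] [DecidableEq m] {A : Matrix m m ℝ}
    (h : A * Aᵀ = 1) : |A.det| = 1 := by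
  have hdet : |A.det| * |A.det| = 1 := by
    simpa [abs_mul_abs_self, det_mul] using congrArg det h
  exact (mul_self_eq_one_iff.mp hdet).resolve_right (by linarith [abs_nonneg A.det])

end Matrix

theorem normalized_eval_matrix_orthogonal_general (φ : ℕ → Polynomial ℝ) (ρ : ℝ → ℝ)
    (hdeg : ∀ n, (φ n).natDegree = n)
    (hint : ∀ m n : ℕ, Integrable (fun x : ℝ => (φ m).eval x * (φ n).eval x * ρ x))
    (horth : ∀ m n : ℕ,
      ∫ x : ℝ, (φ m).eval x * (φ n).eval x * ρ x = if m = n then 1 else 0)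
    (N : ℕ) (y : Fin N → ℝ) (hy : Function.Injective y)
    (hnz : ∀ q : Fin N, (φ (N - 1)).eval (y q) ≠ 0)
    (hlevel : ∀ q q' : Fin N,
      (φ N).eval (y q) / (φ (N - 1)).eval (y q) =
        (φ N).eval (y q') / (φ (N - 1)).eval (y q')) :
    let K : ℝ → ℝ := fun s => ∑ i ∈ Finset.range N, ((φ i).eval s) ^ 2
    let V : Matrix (Fin N) (Fin N) ℝ :=
      Matrix.of fun j k => (φ (k : ℕ)).eval (y j) / Real.sqrt (K (y j))
    V * V.transpose = 1 ∧ V.transpose * V = 1 ∧ |V.det| = 1 := by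
  intro K V
  have hφ : IsOrthonormalSeq ρ φ := ⟨hdeg, hint, horth⟩
  set u : Fin N → Fin N → ℝ := fun j k => (φ k).eval (y j)
  have hK : ∀ j, K (y j) = u j ⬝ᵥ u j := fun j => by
    simp only [K, u, dotProduct, sq,
      Fin.sum_univ_eq_sum_range (fun k => (φ k).eval (y j) * (φ k).eval (y j))]
  have hu : ∀ j, u j ≠ 0 := fun j h => hnz j (congrFun h ⟨N - 1, Nat.sub_lt j.pos one_pos⟩)
  have hrows : Pairwise fun j j' => u j ⬝ᵥ u j' = 0 := by
    intro j j' hjj'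
    simp only [u, dotProduct]
    rw [Fin.sum_univ_eq_sum_range (fun k => (φ k).eval (y j) * (φ k).eval (y j'))]
    exact hφ.sum_eval_mul_eval_eq_zero_of_mul_eq (hy.ne hjj')
      ((div_eq_div_iff (hnz j) (hnz j')).mp (hlevel j j'))
  have hV : V = Matrix.normalizeRows u := by
    ext j k
    simp only [V, u, Matrix.normalizeRows, Matrix.of_apply, hK]
  have hVVt : V * V.transpose = 1 := hV ▸ Matrix.normalizeRows_mul_transpose_eq_one hu hrows
  exact ⟨hVVt, mul_eq_one_comm.mp hVVt, Matrix.abs_det_eq_one_of_mul_transpose_eq_one hVVt⟩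

/-- For orthonormal polynomials `(φ_n)` w.r.t. a probability density `ρ` on ℝ: if distinct
points `y_1,...,y_N` (none a root of `φ_{N−1}`) lie on a common level set of
`r_N = φ_N/φ_{N−1}`, then the matrix `V` with entries `φ_{k}(y_j)/√K(y_j)`,
`K(y) = Σ_{i<N} φ_i(y)²`, is an orthogonal matrix: `V Vᵀ = VᵀV = I` and `|det V| = 1`. -/
theorem normalized_eval_matrix_orthogonal (φ : ℕ → Polynomial ℝ) (ρ : ℝ → ℝ)
    (hρ : ∀ x, 0 ≤ ρ x) (hρ1 : ∫ x : ℝ, ρ x = 1)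
    (hdeg : ∀ n, (φ n).natDegree = n)
    (hlead : ∀ n, 0 < (φ n).leadingCoeff)
    (hint : ∀ m n : ℕ, Integrable (fun x : ℝ => (φ m).eval x * (φ n).eval x * ρ x))
    (horth : ∀ m n : ℕ,
      ∫ x : ℝ, (φ m).eval x * (φ n).eval x * ρ x = if m = n then 1 else 0)
    (N : ℕ) (hN : 1 ≤ N) (y : Fin N → ℝ) (hy : Function.Injective y)
    (hnz : ∀ q : Fin N, (φ (N - 1)).eval (y q) ≠ 0)
    (hlevel : ∀ q q' : Fin N,
      (φ N).eval (y q) / (φ (N - 1)).eval (y q) =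
        (φ N).eval (y q') / (φ (N - 1)).eval (y q')) :
    let K : ℝ → ℝ := fun s => ∑ i ∈ Finset.range N, ((φ i).eval s) ^ 2
    let V : Matrix (Fin N) (Fin N) ℝ :=
      Matrix.of fun j k => (φ (k : ℕ)).eval (y j) / Real.sqrt (K (y j))
    V * V.transpose = 1 ∧ V.transpose * V = 1 ∧ |V.det| = 1 :=
  normalized_eval_matrix_orthogonal_general φ ρ hdeg hint horth N y hy hnz hlevel
end

section
/- Suppose distinct points y_1,...,y_N ∈ ℝ and positive weights w_q = 1/K(y_q) with K(y) = Σ_{i=0}^{N−1} φ_i(y)² satisfy Σ_{q=1}^N w_q φ_i(y_q) φ_j(y_q) = δ_{ij} for all 0 ≤ i,j ≤ N−1. Then the quadrature rule p ↦ Σ_{q=1}^N w_q p(y_q) exactly integrates every polynomial p of degree ≤ 2N−2 against ρ: Σ_{q=1}^N w_q p(y_q) = ∫ p(z) ρ(z) dz. -/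
/-!
Both the rule `p ↦ ∑ w_q p(y_q)` and `p ↦ ∫ p ρ` are linear, and by hypothesis they agree on
every product `φ_i φ_j` with `i, j < N`. Since `φ_0, …, φ_{N-1}` span the polynomials of degree
`< N`, these products span all polynomials of degree `≤ 2N - 2` (a monomial `X^k` with
`k ≤ 2N - 2` factors as `X^a X^b` with `a, b ≤ N - 1`), so the two functionals agree there.
-/

open MeasureTheory Polynomial
open scoped Pointwise

namespace Polynomial

theorem degreeLT_add_le_mul {R : Type*} [CommRing R] (m n : ℕ) :
    degreeLT R (m + n + 1) ≤ degreeLT R (m + 1) * degreeLT R (n + 1) := by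
  classical
  rw [degreeLT_eq_span_X_pow, Submodule.span_le, Finset.coe_image, Set.image_subset_iff]
  intro k hk
  have hX : ∀ {a b : ℕ}, a < b → (X : R[X]) ^ a ∈ degreeLT R b := fun h =>
    mem_degreeLT.mpr ((degree_X_pow_le _).trans_lt (by exact_mod_cast h))
  have hsplit : (X : R[X]) ^ k = X ^ min k m * X ^ (k - min k m) := by
    rw [← pow_add, Nat.add_sub_cancel' (min_le_left k m)]
  have hk : k < m + n + 1 := Finset.mem_range.mp hk
  rw [Set.mem_preimage, SetLike.mem_coe, hsplit]
  exact Submodule.mul_mem_mul (hX (by omega)) (hX (by omega))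

theorem span_image_Iio_eq_degreeLT {K : Type*} [Field K] (φ : ℕ → K[X])
    (hdeg : ∀ n, (φ n).natDegree = n) (hne : ∀ n, φ n ≠ 0) (m : ℕ) :
    Submodule.span K (φ '' Set.Iio m) = degreeLT K m :=
  Sequence.span_degreeLT ⟨φ, fun n => by rw [degree_eq_natDegree (hne n), hdeg]⟩
    fun n _ => (leadingCoeff_ne_zero.mpr (hne n)).isUnit

end Polynomial

def quadratureExactSubmodule {ι : Type*} [Fintype ι] (w y : ι → ℝ) (ρ : ℝ → ℝ)
    (μ : Measure ℝ) : Submodule ℝ ℝ[X] where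
  carrier := {p | Integrable (fun x => p.eval x * ρ x) μ ∧
    ∑ q, w q * p.eval (y q) = ∫ x, p.eval x * ρ x ∂μ}
  zero_mem' := by simp
  add_mem' := by
    rintro p r ⟨hp, hp'⟩ ⟨hr, hr'⟩
    refine ⟨by simp only [eval_add, add_mul]; exact hp.add hr, ?_⟩
    simp only [eval_add, mul_add, add_mul, Finset.sum_add_distrib, hp', hr',
      integral_add hp hr]
  smul_mem' := by
    rintro c p ⟨hp, hp'⟩
    refine ⟨by simpa only [eval_smul, smul_eq_mul, mul_assoc] using hp.const_mul c, ?_⟩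
    simp only [eval_smul, smul_eq_mul, mul_assoc, integral_const_mul, ← Finset.mul_sum,
      mul_left_comm _ c, hp']

theorem discrete_orthonormality_implies_quadrature_exactness_general
    (φ : ℕ → Polynomial ℝ) (ρ : ℝ → ℝ)
    (hdeg : ∀ n, (φ n).natDegree = n)
    (hlead : ∀ n, 0 < (φ n).leadingCoeff)
    (hint : ∀ m n : ℕ, Integrable (fun x : ℝ => (φ m).eval x * (φ n).eval x * ρ x))
    (horth : ∀ m n : ℕ,
      ∫ x : ℝ, (φ m).eval x * (φ n).eval x * ρ x = if m = n then 1 else 0)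
    (N : ℕ) (hN : 1 ≤ N) (y : Fin N → ℝ)
    (hdisc : ∀ i j : ℕ, i < N → j < N →
      ∑ q : Fin N, (1 / ∑ k ∈ Finset.range N, ((φ k).eval (y q)) ^ 2) *
        ((φ i).eval (y q)) * ((φ j).eval (y q)) = if i = j then 1 else 0) :
    ∀ p : Polynomial ℝ, p.natDegree ≤ 2 * N - 2 →
      ∑ q : Fin N, (1 / ∑ k ∈ Finset.range N, ((φ k).eval (y q)) ^ 2) * p.eval (y q) =
        ∫ z : ℝ, p.eval z * ρ z := by
  intro p hp
  obtain ⟨m, rfl⟩ : ∃ m, N = m + 1 := ⟨N - 1, by omega⟩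
  have hspan := span_image_Iio_eq_degreeLT φ hdeg
    (fun n => leadingCoeff_ne_zero.mp (hlead n).ne') (m + 1)
  have hp_mem : p ∈ Submodule.span ℝ (φ '' Set.Iio (m + 1) * φ '' Set.Iio (m + 1)) := by
    rw [← Submodule.span_mul_span, hspan]
    refine degreeLT_add_le_mul m m (mem_degreeLT.mpr ?_)
    exact degree_le_natDegree.trans_lt (by exact_mod_cast (by omega : p.natDegree < m + m + 1))
  have hexact : Submodule.span ℝ (φ '' Set.Iio (m + 1) * φ '' Set.Iio (m + 1)) ≤
      quadratureExactSubmodule (fun q => 1 / ∑ k ∈ Finset.range (m + 1), ((φ k).eval (y q)) ^ 2)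
        y ρ volume := by
    rw [Submodule.span_le]
    rintro _ ⟨_, ⟨i, hi, rfl⟩, _, ⟨j, hj, rfl⟩, rfl⟩
    refine ⟨by simpa only [eval_mul] using hint i j, ?_⟩
    simp only [eval_mul, ← mul_assoc, hdisc i j hi hj, horth]
  exact (hexact hp_mem).2

/-- If distinct points `y_q` with weights `w_q = 1/K(y_q)`, `K(y) = Σ_{i<N} φ_i(y)²`,
reproduce the orthonormality relations of `φ_0,...,φ_{N−1}` (orthonormal polynomials for
a probability density `ρ`, `φ_0 ≡ 1`), then the quadrature rule integrates every
polynomial of degree ≤ 2N−2 exactly against `ρ`. -/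
theorem discrete_orthonormality_implies_quadrature_exactness
    (φ : ℕ → Polynomial ℝ) (ρ : ℝ → ℝ)
    (hρ : ∀ x, 0 ≤ ρ x) (hρ1 : ∫ x : ℝ, ρ x = 1)
    (hdeg : ∀ n, (φ n).natDegree = n)
    (hlead : ∀ n, 0 < (φ n).leadingCoeff)
    (hφ0 : φ 0 = 1)
    (hint : ∀ m n : ℕ, Integrable (fun x : ℝ => (φ m).eval x * (φ n).eval x * ρ x))
    (horth : ∀ m n : ℕ,
      ∫ x : ℝ, (φ m).eval x * (φ n).eval x * ρ x = if m = n then 1 else 0)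
    (N : ℕ) (hN : 1 ≤ N) (y : Fin N → ℝ) (hy : Function.Injective y)
    (hdisc : ∀ i j : ℕ, i < N → j < N →
      ∑ q : Fin N, (1 / ∑ k ∈ Finset.range N, ((φ k).eval (y q)) ^ 2) *
        ((φ i).eval (y q)) * ((φ j).eval (y q)) = if i = j then 1 else 0) :
    ∀ p : Polynomial ℝ, p.natDegree ≤ 2 * N - 2 →
      ∑ q : Fin N, (1 / ∑ k ∈ Finset.range N, ((φ k).eval (y q)) ^ 2) * p.eval (y q) =
        ∫ z : ℝ, p.eval z * ρ z :=
  discrete_orthonormality_implies_quadrature_exactness_general φ ρ hdeg hlead hint horth N hN y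
    hdisc
end
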